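/- arXiv:1704.03972 — 2 statements merged into one kernel-verified Lean document; each statement's English description precedes it below -/
import Mathlib

section
/- Let T₁, …, T_m : ℚ^k → ℚ^k be affine maps and u₁, …, u_{m+1} ∈ ℚ^k vectors with u_{i+1} = T_i(u_i) for each i. Let H ⊆ ℚ^k be an affine subspace with u_{m+1} ∉ H and m ≥ dim(H) + 2. Then there exist indices 1 ≤ j₁ < j₂ < … < j_n ≤ m with n ≤ dim(H) + 1 such that T_{j_n}(T_{j_{n-1}}(⋯ T_{j_1}(u₁)⋯)) ∉ H. -/
/-!
Increasing index sequences are the sublists of `[1, …, m]`; write `disp s = s(u₁) - u₁`, with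
`V` the direction of `H`. Suppose `disp s ∈ V` for all sublists of length at most `dim V + 1`
and show it for all sublists `s`, by strong induction on their length. The spans `U_r` of the
displacements of the sublists of the first `r` letters of `s` increase and lie in `V` for
`r ≤ dim V + 1`, so `U_r = U_{r+1}` for some `r ≤ dim V`. Split `s = p ++ t` after its
`(r+1)`-st letter: `disp s = A (disp p) + disp t` with `A` the linear part of `t`, and
`disp p ∈ U_{r+1} = U_r` is a combination of `disp p'` for sublists `p'` of the first `r`
letters, where `A (disp p') = disp (p' ++ t) - disp t` involves only shorter sublists.
-/

open Module

section AffineChain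

variable {K E ι : Type*} [Field K] [AddCommGroup E] [Module K E]

theorem Submodule.exists_eq_succ_of_monotone {U : ℕ → Submodule K E} (hU : Monotone U)
    (V : Submodule K E) [FiniteDimensional K V] (hV : U (finrank K V + 1) ≤ V) :
    ∃ r ≤ finrank K V, U r = U (r + 1) := by
  by_contra! hne
  have hle : ∀ r ≤ finrank K V + 1, U r ≤ V := fun r hr => (hU hr).trans hV
  have hrank : ∀ r ≤ finrank K V + 1, r ≤ finrank K (U r) := by
    intro r
    induction r with
    | zero => exact fun _ => Nat.zero_le _
    | succ r ih =>
      intro hr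
      have : FiniteDimensional K (U (r + 1)) := Submodule.finiteDimensional_of_le (hle _ hr)
      have hlt := Submodule.finrank_lt_finrank_of_lt
        (lt_of_le_of_ne (hU r.le_succ) (hne r (by omega)))
      exact (Nat.succ_le_succ (ih (by omega))).trans hlt
  have := (hrank _ le_rfl).trans (Submodule.finrank_mono hV)
  omega

variable (f : ι → E →ᵃ[K] E) (x : E)

theorem exists_affineMap_foldl_eq (s : List ι) :
    ∃ g : E →ᵃ[K] E, ∀ y, s.foldl (fun y i => f i y) y = g y := by
  induction s with
  | nil => exact ⟨AffineMap.id K E, fun _ => rfl⟩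
  | cons i s ih =>
    obtain ⟨g, hg⟩ := ih
    exact ⟨g.comp (f i), fun y => hg (f i y)⟩

def chainDisplacement (s : List ι) : E :=
  s.foldl (fun y i => f i y) x - x

theorem exists_linearMap_chainDisplacement_append (t : List ι) :
    ∃ A : E →ₗ[K] E, ∀ p, chainDisplacement f x (p ++ t) =
      A (chainDisplacement f x p) + chainDisplacement f x t := by
  obtain ⟨g, hg⟩ := exists_affineMap_foldl_eq f t
  refine ⟨g.linear, fun p => ?_⟩
  have hlin := g.linearMap_vsub (p.foldl (fun y i => f i y) x) x
  simp only [vsub_eq_sub] at hlin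
  simp only [chainDisplacement, List.foldl_append, hg, hlin]
  abel

theorem chainDisplacement_mem_of_forall_shorter_sublist (V : Submodule K E)
    [FiniteDimensional K V] (l : List ι) (hlen : finrank K V + 2 ≤ l.length)
    (hl : ∀ s, s.Sublist l → s.length < l.length → chainDisplacement f x s ∈ V) :
    chainDisplacement f x l ∈ V := by
  set U : ℕ → Submodule K E :=
    fun r => Submodule.span K (chainDisplacement f x '' {s | s.Sublist (l.take r)})
  have hU : Monotone U := fun r r' h =>
    Submodule.span_mono (Set.image_mono fun s hs => hs.trans (List.take_sublist_take_left h))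
  have hUV : U (finrank K V + 1) ≤ V := by
    refine Submodule.span_le.mpr ?_
    rintro _ ⟨s, hs, rfl⟩
    refine hl s (hs.trans (List.take_sublist _ _)) (hs.length_le.trans_lt ?_)
    simp only [List.length_take]
    omega
  obtain ⟨r, hr, hUr⟩ := Submodule.exists_eq_succ_of_monotone hU V hUV
  set t := l.drop (r + 1)
  obtain ⟨A, hA⟩ := exists_linearMap_chainDisplacement_append f x t
  have ht : chainDisplacement f x t ∈ V :=
    hl t (List.drop_sublist _ _) (by simp only [t, List.length_drop]; omega)
  have hAU : U r ≤ V.comap A := by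
    refine Submodule.span_le.mpr ?_
    rintro _ ⟨s, hs, rfl⟩
    have hst : (s ++ t).Sublist l := by
      simpa only [List.take_append_drop] using
        hs.append (List.drop_sublist_drop_left l r.le_succ)
    have hlt : (s ++ t).length < l.length := by
      have := hs.length_le
      simp only [List.length_append, List.length_take, List.length_drop, t] at this ⊢
      omega
    show A _ ∈ V
    rw [eq_sub_of_add_eq (hA s).symm]
    exact sub_mem (hl _ hst hlt) ht
  have htake : chainDisplacement f x (l.take (r + 1)) ∈ U r :=
    hUr ▸ Submodule.subset_span ⟨_, List.Sublist.refl _, rfl⟩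
  rw [← List.take_append_drop (r + 1) l, hA]
  exact add_mem (hAU htake) ht

theorem chainDisplacement_mem_of_forall_short_sublist (V : Submodule K E)
    [FiniteDimensional K V] (l : List ι)
    (hl : ∀ s, s.Sublist l → s.length ≤ finrank K V + 1 → chainDisplacement f x s ∈ V) :
    chainDisplacement f x l ∈ V := by
  induction hn : l.length using Nat.strong_induction_on generalizing l with
  | _ n ih =>
    subst hn
    by_cases hshort : l.length ≤ finrank K V + 1
    · exact hl l (List.Sublist.refl l) hshort
    refine chainDisplacement_mem_of_forall_shorter_sublist f x V l (by omega) ?_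
    exact fun s hs hlt => ih _ hlt s (fun s' hs' => hl s' (hs'.trans hs)) rfl

end AffineChain

theorem Fin.last_eq_foldl_finRange {α : Type*} {m : ℕ} (F : Fin m → α → α)
    (u : Fin (m + 1) → α) (hu : ∀ i : Fin m, u i.succ = F i (u i.castSucc)) :
    u (Fin.last m) = (List.finRange m).foldl (fun x i => F i x) (u 0) := by
  induction m with
  | zero => rfl
  | succ m ih =>
    have hinit := ih (fun i => F i.castSucc) (fun i => u i.castSucc) (fun i => hu i.castSucc)
    rw [Fin.castSucc_zero] at hinit
    rw [List.finRange_succ_last, List.foldl_append, List.foldl_map, ← hinit]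
    exact hu (Fin.last m)

theorem stmt_1_general (k m : ℕ)
    (M : Fin m → Matrix (Fin k) (Fin k) ℚ) (b : Fin m → Fin k → ℚ)
    (T : Fin m → (Fin k → ℚ) → (Fin k → ℚ))
    (hT : ∀ i x, T i x = (M i).mulVec x + b i)
    (u : Fin (m + 1) → Fin k → ℚ)
    (hu : ∀ i : Fin m, u i.succ = T i (u i.castSucc))
    (H : Set (Fin k → ℚ)) (a : Fin k → ℚ) (V : Submodule ℚ (Fin k → ℚ))
    (hH : H = {x | x - a ∈ V})
    (hnot : u (Fin.last m) ∉ H) :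
    ∃ n : ℕ, ∃ j : Fin n → Fin m, StrictMono j ∧ n ≤ Module.finrank ℚ V + 1 ∧
      (List.ofFn j).foldl (fun x i => T i x) (u 0) ∉ H := by
  by_contra! hshort
  subst hH
  obtain ⟨f, rfl⟩ : ∃ f : Fin m → (Fin k → ℚ) →ᵃ[ℚ] (Fin k → ℚ), (fun i => ⇑(f i)) = T :=
    ⟨fun i => (M i).mulVecLin.toAffineMap + AffineMap.const ℚ _ (b i),
      funext fun i => funext fun x => by simp [hT]⟩
  have hmem : ∀ s : List (Fin m), s.Sublist (List.finRange m) → s.length ≤ finrank ℚ V + 1 →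
      s.foldl (fun x i => f i x) (u 0) - a ∈ V := fun s hs hlen => by
    simpa only [List.ofFn_get, Set.mem_ofPred_eq] using
      hshort s.length s.get ((List.pairwise_lt_finRange m).sublist hs).sortedLT hlen
  have hu0 : u 0 - a ∈ V := hmem [] (List.nil_sublist _) (Nat.zero_le _)
  have hdisp := chainDisplacement_mem_of_forall_short_sublist f (u 0) V (List.finRange m)
    fun s hs hlen => by
      simpa only [chainDisplacement, sub_sub_sub_cancel_right] using sub_mem (hmem s hs hlen) hu0
  apply hnot
  rw [Set.mem_ofPred_eq, Fin.last_eq_foldl_finRange _ u hu, ← sub_add_sub_cancel _ (u 0)]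
  exact add_mem hdisp hu0

theorem stmt_1 (k m : ℕ)
    (M : Fin m → Matrix (Fin k) (Fin k) ℚ) (b : Fin m → Fin k → ℚ)
    (T : Fin m → (Fin k → ℚ) → (Fin k → ℚ))
    (hT : ∀ i x, T i x = (M i).mulVec x + b i)
    (u : Fin (m + 1) → Fin k → ℚ)
    (hu : ∀ i : Fin m, u i.succ = T i (u i.castSucc))
    (H : Set (Fin k → ℚ)) (a : Fin k → ℚ) (V : Submodule ℚ (Fin k → ℚ))
    (hH : H = {x | x - a ∈ V})
    (hnot : u (Fin.last m) ∉ H)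
    (hm : m ≥ Module.finrank ℚ V + 2) :
    ∃ n : ℕ, ∃ j : Fin n → Fin m, StrictMono j ∧ n ≤ Module.finrank ℚ V + 1 ∧
      (List.ofFn j).foldl (fun x i => T i x) (u 0) ∉ H :=
  stmt_1_general k m M b T hT u hu H a V hH hnot
end

section
/- Fix affine maps T₀, T₁, …, T_{m-1}, R : ℚ^n → ℚ^n and an affine subspace H ⊆ ℚ^n with dim(H) ≤ n − 1. Suppose R(T_{m-1}(⋯T₁(T₀(u))⋯)) ∉ H and m − 1 ≥ n + 1. Then there exist indices 1 ≤ j₁ < ⋯ < j_t ≤ m − 1 with t ≤ n such that R(T_{j_t}(⋯T_{j_1}(T₀(u))⋯)) ∉ H. -/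
/-!
Let `S_k` be the affine span of all points reached from `p` along subsequences of the first `k`
maps. Then `S_{k+1} = S_k ⊔ f_{k+1}(S_k)`, so either `S_{k+1} = S_k` or `dim S_{k+1} > dim S_k`.
Hence a point of `S_k` is an affine combination of points reached along at most `dim S_k ≤ n`
maps. The orbit point lies in the last `S_k`, so every affine subspace containing the points
reached along at most `n` maps, such as `R⁻¹(H)`, contains it.
-/

open AffineSubspace Module

namespace AffineMap

variable {k V P ι : Type*} [Field k] [AddCommGroup V] [Module k V] [AddTorsor V P]

theorem exists_coe_eq_of_eq_add {F : Type*} [AddCommGroup F] [Module k F] (g : V → F)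
    (L : V →ₗ[k] F) (c : F) (hg : ∀ x, g x = L x + c) : ∃ φ : V →ᵃ[k] F, ⇑φ = g :=
  ⟨mk' g L 0 fun x => by simp [hg], coe_mk' ..⟩

variable (f : ι → P →ᵃ[k] P) (p : P)

def sublistOrbit (l : List ι) (d : ℕ) : Set P :=
  {q | ∃ s : List ι, s.Sublist l ∧ s.length ≤ d ∧ s.foldl (fun x i => f i x) p = q}

def orbitSpan (l : List ι) : AffineSubspace k P :=
  l.foldl (fun S i => S ⊔ S.map (f i)) (affineSpan k {p})

theorem sublistOrbit_mono {l l' : List ι} {d d' : ℕ} (hl : l.Sublist l') (hd : d ≤ d') :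
    sublistOrbit f p l d ⊆ sublistOrbit f p l' d' := by
  rintro q ⟨s, hs, hlen, rfl⟩
  exact ⟨s, hs.trans hl, hlen.trans hd, rfl⟩

theorem orbitSpan_append_singleton (l : List ι) (i : ι) :
    orbitSpan f p (l ++ [i]) = orbitSpan f p l ⊔ (orbitSpan f p l).map (f i) := by
  simp only [orbitSpan, List.foldl_append, List.foldl_cons, List.foldl_nil]

theorem foldl_mem_orbitSpan (l : List ι) : l.foldl (fun x i => f i x) p ∈ orbitSpan f p l := by
  induction l using List.reverseRecOn with
  | nil => exact mem_affineSpan k rfl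
  | append_singleton l i ih =>
    rw [orbitSpan_append_singleton, List.foldl_append]
    exact le_sup_right (α := AffineSubspace k P) (mem_map_of_mem (f i) ih)

theorem orbitSpan_le_affineSpan_sublistOrbit [FiniteDimensional k V] (l : List ι) :
    orbitSpan f p l ≤ affineSpan k (sublistOrbit f p l (finrank k (orbitSpan f p l).direction)) := by
  induction l using List.reverseRecOn with
  | nil =>
    refine affineSpan_mono k ?_
    rintro _ rfl
    exact ⟨[], .refl _, Nat.zero_le _, rfl⟩
  | append_singleton l i ih =>
    have hsub {d : ℕ} (hd : finrank k (orbitSpan f p l).direction ≤ d) :=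
      sublistOrbit_mono f p (List.sublist_append_left l [i]) hd
    by_cases hinv : (orbitSpan f p l).map (f i) ≤ orbitSpan f p l
    · rw [orbitSpan_append_singleton, sup_eq_left.2 hinv]
      exact ih.trans (affineSpan_mono k (hsub le_rfl))
    · have hlt := Submodule.finrank_lt_finrank_of_lt <|
        direction_lt_of_nonempty (left_lt_sup.2 hinv) ⟨_, foldl_mem_orbitSpan f p l⟩
      rw [orbitSpan_append_singleton]
      refine sup_le (ih.trans (affineSpan_mono k (hsub hlt.le))) ?_
      refine (map_mono (f i) ih).trans ?_
      rw [map_span]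
      refine affineSpan_mono k ?_
      rintro _ ⟨_, ⟨s, hs, hlen, rfl⟩, rfl⟩
      refine ⟨s ++ [i], hs.append (.refl _), ?_, List.foldl_append ..⟩
      rw [List.length_append, List.length_singleton]
      omega

theorem foldl_mem_affineSpan_sublistOrbit [FiniteDimensional k V] (l : List ι) :
    l.foldl (fun x i => f i x) p ∈ affineSpan k (sublistOrbit f p l (finrank k V)) :=
  affineSpan_mono k (sublistOrbit_mono f p (.refl l) (Submodule.finrank_le _))
    (orbitSpan_le_affineSpan_sublistOrbit f p l (foldl_mem_orbitSpan f p l))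

end AffineMap

open AffineMap

theorem stmt_12 (n m : ℕ)
    (M : Fin m → Matrix (Fin n) (Fin n) ℚ) (b : Fin m → Fin n → ℚ)
    (T : Fin m → (Fin n → ℚ) → (Fin n → ℚ))
    (hT : ∀ i x, T i x = (M i).mulVec x + b i)
    (MR : Matrix (Fin n) (Fin n) ℚ) (bR : Fin n → ℚ)
    (R : (Fin n → ℚ) → (Fin n → ℚ)) (hR : ∀ x, R x = MR.mulVec x + bR)
    (H : Set (Fin n → ℚ)) (a : Fin n → ℚ) (V : Submodule ℚ (Fin n → ℚ))
    (hH : H = {x | x - a ∈ V})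
    (u : Fin n → ℚ)
    (hm : m - 1 ≥ n + 1)
    (hnot : R ((List.finRange m).foldl (fun x i => T i x) u) ∉ H) :
    ∃ t : ℕ, ∃ j : Fin t → Fin m, StrictMono j ∧ (∀ i, 1 ≤ (j i).val) ∧ t ≤ n ∧
      R ((List.ofFn j).foldl (fun x i => T i x) (T ⟨0, by omega⟩ u)) ∉ H := by
  obtain ⟨m, rfl⟩ : ∃ m', m = m' + 1 := ⟨m - 1, by omega⟩
  choose Ta hTa using fun i => exists_coe_eq_of_eq_add (T i) (M i).mulVecLin (b i) (hT i)
  obtain rfl : T = fun i => ⇑(Ta i) := funext fun i => (hTa i).symm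
  obtain ⟨Ra, rfl⟩ := exists_coe_eq_of_eq_add R MR.mulVecLin bR hR
  set K := (AffineSubspace.mk' a V).comap Ra
  have hK : ∀ x, x ∈ K ↔ Ra x ∈ H := fun x => by simp [K, hH, mem_mk', vsub_eq_sub]
  by_contra! hshort
  have hsublist : sublistOrbit Ta (Ta 0 u) ((List.finRange m).map Fin.succ) n ⊆ K := by
    rintro _ ⟨s, hs, hlen, rfl⟩
    have hsorted : s.Pairwise (· < ·) :=
      ((List.pairwise_lt_finRange m).map Fin.succ fun _ _ => Fin.succ_lt_succ_iff.2).sublist hs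
    have hpos : ∀ i, 1 ≤ (s.get i).val := fun i => by
      obtain ⟨j, -, hj⟩ := List.mem_map.1 (hs.subset (s.get_mem i))
      rw [← hj, Fin.val_succ]
      omega
    simpa [hK, Fin.zero_eta] using
      hshort s.length s.get hsorted.sortedLT.strictMono_get hpos hlen
  apply hnot
  rw [List.finRange_succ, List.foldl_cons, ← hK]
  have horbit := foldl_mem_affineSpan_sublistOrbit Ta (Ta 0 u) ((List.finRange m).map Fin.succ)
  rw [finrank_fin_fun] at horbit
  simpa using affineSpan_le.2 hsublist horbit
end
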